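/- Gaussian integration identity relating ψ and ψ_S at t = 1 (unit norms): in the r-th level interpolating setup, assume additionally ‖x^{(i)}‖₂ = 1 for all x^{(i)} ∈ X and ‖y^{(i)}‖₂ = 1 for all y^{(i)} ∈ Y. Let ψ_S(X,Y,p,q,𝔪,β,s,t) be defined exactly as ψ but with Z replaced by Z_S = Σ_{i₁}(Σ_{i₂} exp(β D_{0,S}^{(i₁,i₂)}))^s, where D_{0,S}^{(i₁,i₂)} = √t (y^{(i₂)})ᵀGx^{(i₁)} + √(1−t)‖x^{(i₁)}‖₂(y^{(i₂)})ᵀ Σ_{k=1}^{r+1} b_k u^{(2,k)} + √(1−t)‖y^{(i₂)}‖₂(Σ_{k=1}^{r+1} c_k h^{(k)})ᵀx^{(i₁)} (i.e., the u^{(4,k)} terms are removed). Then integrating out the scalar Gaussians u^{(4,k)} yields: ψ_S(X,Y,p,q,𝔪,β,s,1) = −(sign(s) s β/(2√n)) Σ_{k=1}^{r+1} (p_{k−1}q_{k−1} − p_kq_k) 𝔪_k + ψ(X,Y,p,q,𝔪,β,s,1). -/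

import Mathlib

set_option linter.unusedVariables false

open MeasureTheory Real

namespace SFLR

noncomputable section

/-- The sample space of one group `𝒰_k = (u^{(4,k)}, u^{(2,k)}, h^{(k)})`. -/
abbrev Us (m n : ℕ) : Type := ℝ × (Fin m → ℝ) × (Fin n → ℝ)

/-- Standard Gaussian measure on `ℝ`. -/
def stdG : Measure ℝ := ProbabilityTheory.gaussianReal 0 1

/-- i.i.d. standard Gaussian vector measure. -/
def gVec (d : ℕ) : Measure (Fin d → ℝ) := Measure.pi fun _ => stdG

/-- i.i.d. standard Gaussian matrix measure. -/
def gMat (m n : ℕ) : Measure (Fin m → Fin n → ℝ) := Measure.pi fun _ => gVec n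

/-- Law of one group `𝒰_k`. -/
def muU (m n : ℕ) : Measure (Us m n) := stdG.prod ((gVec m).prod (gVec n))

/-- Joint law of `(G, (𝒰_k)_{k=1}^{r+1})`; the `k`-th group `𝒰_k` is coordinate `k-1`. -/
def muAll (r m n : ℕ) : Measure ((Fin m → Fin n → ℝ) × (Fin (r+1) → Us m n)) :=
  (gMat m n).prod (Measure.pi fun _ : Fin (r+1) => muU m n)

/-- Euclidean norm. -/
def nrm2 {d : ℕ} (v : Fin d → ℝ) : ℝ := Real.sqrt (∑ i, v i ^ 2)

/-- Euclidean inner product. -/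
def dotv {d : ℕ} (a b : Fin d → ℝ) : ℝ := ∑ i, a i * b i

variable {m n l : ℕ}

/-- The `r`-th level interpolating exponent `D₀^{(i₁,i₂)}`; the factor `ε` multiplies the
`u^{(4,k)}`-terms (`ε = 1` gives `D₀`, `ε = 0` gives `D_{0,S}`). -/
def D0R (r : ℕ) (ε β s t : ℝ) (mv p q : ℕ → ℝ) (x : Fin l → Fin n → ℝ) (y : Fin l → Fin m → ℝ)
    (G : Fin m → Fin n → ℝ) (U : Fin (r+1) → Us m n) (i1 i2 : Fin l) : ℝ :=
  Real.sqrt t * (∑ j, ∑ k, y i2 j * (G j k * x i1 k))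
    + Real.sqrt (1 - t) * nrm2 (x i1) *
        (∑ j, y i2 j * (∑ k : Fin (r+1), Real.sqrt (p (k : ℕ) - p ((k : ℕ) + 1)) * (U k).2.1 j))
    + ε * (Real.sqrt t * nrm2 (x i1) * nrm2 (y i2) *
        (∑ k : Fin (r+1),
          Real.sqrt (p (k : ℕ) * q (k : ℕ) - p ((k : ℕ) + 1) * q ((k : ℕ) + 1)) * (U k).1))
    + Real.sqrt (1 - t) * nrm2 (y i2) *
        (∑ kk, (∑ k : Fin (r+1), Real.sqrt (q (k : ℕ) - q ((k : ℕ) + 1)) * (U k).2.2 kk) * x i1 kk)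

/-- `A^{(i₁,i₂)}`. -/
def AR (r : ℕ) (ε β s t : ℝ) (mv p q : ℕ → ℝ) (x : Fin l → Fin n → ℝ) (y : Fin l → Fin m → ℝ)
    (G : Fin m → Fin n → ℝ) (U : Fin (r+1) → Us m n) (i1 i2 : Fin l) : ℝ :=
  Real.exp (β * D0R r ε β s t mv p q x y G U i1 i2)

/-- `C^{(i₁)}`. -/
def CR (r : ℕ) (ε β s t : ℝ) (mv p q : ℕ → ℝ) (x : Fin l → Fin n → ℝ) (y : Fin l → Fin m → ℝ)
    (G : Fin m → Fin n → ℝ) (U : Fin (r+1) → Us m n) (i1 : Fin l) : ℝ :=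
  ∑ i2, AR r ε β s t mv p q x y G U i1 i2

/-- `Z`. -/
def ZR (r : ℕ) (ε β s t : ℝ) (mv p q : ℕ → ℝ) (x : Fin l → Fin n → ℝ) (y : Fin l → Fin m → ℝ)
    (G : Fin m → Fin n → ℝ) (U : Fin (r+1) → Us m n) : ℝ :=
  ∑ i1, CR r ε β s t mv p q x y G U i1 ^ s

/-- `ζ_k`: successively integrated partition functions, `ζ₀ = Z`,
`ζ_k = E_{𝒰_k} ζ_{k-1}^{𝔪_k/𝔪_{k-1}}`. -/
def zetaR (r : ℕ) (ε β s t : ℝ) (mv p q : ℕ → ℝ) (x : Fin l → Fin n → ℝ)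
    (y : Fin l → Fin m → ℝ) (G : Fin m → Fin n → ℝ) : ℕ → (Fin (r+1) → Us m n) → ℝ
  | 0, U => ZR r ε β s t mv p q x y G U
  | k+1, U =>
      if h : k < r + 1 then
        ∫ u, zetaR r ε β s t mv p q x y G k (Function.update U ⟨k, h⟩ u) ^ (mv (k+1) / mv k)
          ∂ muU m n
      else 0

/-- The `r`-th level interpolating function `ψ`. -/
def psiR (r : ℕ) (ε β s t : ℝ) (mv p q : ℕ → ℝ) (x : Fin l → Fin n → ℝ)
    (y : Fin l → Fin m → ℝ) : ℝ :=
  ∫ ω, (β * |s| * Real.sqrt (n : ℝ) * mv r)⁻¹ *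
      Real.log (zetaR r ε β s t mv p q x y ω.1 r ω.2) ∂ muAll r m n

/-- The operator `Φ_{𝒰_k}` (for `k ≥ 1`). -/
def PhiR (r : ℕ) (ε β s t : ℝ) (mv p q : ℕ → ℝ) (x : Fin l → Fin n → ℝ)
    (y : Fin l → Fin m → ℝ) (k : ℕ)
    (f : (Fin m → Fin n → ℝ) → (Fin (r+1) → Us m n) → ℝ) :
    (Fin m → Fin n → ℝ) → (Fin (r+1) → Us m n) → ℝ :=
  fun G U =>
    if h : k - 1 < r + 1 then
      (∫ u, zetaR r ε β s t mv p q x y G (k-1) (Function.update U ⟨k-1, h⟩ u) ^ (mv k / mv (k-1))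
          * f G (Function.update U ⟨k-1, h⟩ u) ∂ muU m n) /
        zetaR r ε β s t mv p q x y G k U
    else 0

/-- `Φ_{𝒰_hi} ∘ ⋯ ∘ Φ_{𝒰_lo}` (identity when `hi < lo`). -/
def PhiUpToR (r : ℕ) (ε β s t : ℝ) (mv p q : ℕ → ℝ) (x : Fin l → Fin n → ℝ)
    (y : Fin l → Fin m → ℝ) (lo : ℕ) :
    ℕ → ((Fin m → Fin n → ℝ) → (Fin (r+1) → Us m n) → ℝ) →
      (Fin m → Fin n → ℝ) → (Fin (r+1) → Us m n) → ℝ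
  | 0, f => f
  | hi+1, f =>
      if hi + 1 < lo then f
      else PhiR r ε β s t mv p q x y (hi+1) (PhiUpToR r ε β s t mv p q x y lo hi f)

/-- `γ₀(i₁,i₂)`. -/
def gam0R (r : ℕ) (ε β s t : ℝ) (mv p q : ℕ → ℝ) (x : Fin l → Fin n → ℝ)
    (y : Fin l → Fin m → ℝ) (i1 i2 : Fin l) :
    (Fin m → Fin n → ℝ) → (Fin (r+1) → Us m n) → ℝ :=
  fun G U =>
    CR r ε β s t mv p q x y G U i1 ^ s / ZR r ε β s t mv p q x y G U *
      (AR r ε β s t mv p q x y G U i1 i2 / CR r ε β s t mv p q x y G U i1)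

/-- The measure `γ_{k₁+1}^{(r)}`. -/
def gamR (r : ℕ) (ε β s t : ℝ) (mv p q : ℕ → ℝ) (x : Fin l → Fin n → ℝ)
    (y : Fin l → Fin m → ℝ) (k1 : ℕ) (i1 i2 pp1 pp2 : Fin l) :
    (Fin m → Fin n → ℝ) → (Fin (r+1) → Us m n) → ℝ :=
  PhiUpToR r ε β s t mv p q x y (k1+1) r
    (fun G U =>
      PhiUpToR r ε β s t mv p q x y 1 k1 (gam0R r ε β s t mv p q x y i1 i2) G U *
        PhiUpToR r ε β s t mv p q x y 1 k1 (gam0R r ε β s t mv p q x y pp1 pp2) G U)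

/-- The measure `γ₀₁^{(r)}`. -/
def gam01R (r : ℕ) (ε β s t : ℝ) (mv p q : ℕ → ℝ) (x : Fin l → Fin n → ℝ)
    (y : Fin l → Fin m → ℝ) (i1 i2 : Fin l) :
    (Fin m → Fin n → ℝ) → (Fin (r+1) → Us m n) → ℝ :=
  PhiUpToR r ε β s t mv p q x y 1 r (gam0R r ε β s t mv p q x y i1 i2)

/-- The measure `γ₀₂^{(r)}`. -/
def gam02R (r : ℕ) (ε β s t : ℝ) (mv p q : ℕ → ℝ) (x : Fin l → Fin n → ℝ)
    (y : Fin l → Fin m → ℝ) (i1 i2 p2 : Fin l) :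
    (Fin m → Fin n → ℝ) → (Fin (r+1) → Us m n) → ℝ :=
  PhiUpToR r ε β s t mv p q x y 1 r
    (fun G U =>
      gam0R r ε β s t mv p q x y i1 i2 G U * gam0R r ε β s t mv p q x y i1 p2 G U)

/-- `E_{G,𝒰_{r+1}} ⟨f⟩_{γ_{k₁+1}^{(r)}}`. -/
def EBrR (r : ℕ) (ε β s t : ℝ) (mv p q : ℕ → ℝ) (x : Fin l → Fin n → ℝ)
    (y : Fin l → Fin m → ℝ) (k1 : ℕ) (f : Fin l → Fin l → Fin l → Fin l → ℝ) : ℝ :=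
  ∫ ω, (∑ i1, ∑ i2, ∑ pp1, ∑ pp2,
      f i1 i2 pp1 pp2 * gamR r ε β s t mv p q x y k1 i1 i2 pp1 pp2 ω.1 ω.2) ∂ muAll r m n

/-- `E_{G,𝒰_{r+1}} ⟨f⟩_{γ₀₁^{(r)}}`. -/
def EB01R (r : ℕ) (ε β s t : ℝ) (mv p q : ℕ → ℝ) (x : Fin l → Fin n → ℝ)
    (y : Fin l → Fin m → ℝ) (f : Fin l → Fin l → ℝ) : ℝ :=
  ∫ ω, (∑ i1, ∑ i2, f i1 i2 * gam01R r ε β s t mv p q x y i1 i2 ω.1 ω.2) ∂ muAll r m n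

/-- `E_{G,𝒰_{r+1}} ⟨f⟩_{γ₀₂^{(r)}}`. -/
def EB02R (r : ℕ) (ε β s t : ℝ) (mv p q : ℕ → ℝ) (x : Fin l → Fin n → ℝ)
    (y : Fin l → Fin m → ℝ) (f : Fin l → Fin l → Fin l → ℝ) : ℝ :=
  ∫ ω, (∑ i1, ∑ i2, ∑ p2, f i1 i2 p2 * gam02R r ε β s t mv p q x y i1 i2 p2 ω.1 ω.2)
    ∂ muAll r m n

/-- `E_{G,𝒰_{r+1}} ⟨‖x^{(i₁)}‖‖x^{(p₁)}‖‖y^{(i₂)}‖‖y^{(p₂)}‖⟩_{γ_{k₁+1}^{(r)}}`. -/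
def EXR (r : ℕ) (ε β s t : ℝ) (mv p q : ℕ → ℝ) (x : Fin l → Fin n → ℝ)
    (y : Fin l → Fin m → ℝ) (k1 : ℕ) : ℝ :=
  EBrR r ε β s t mv p q x y k1
    (fun i1 i2 pp1 pp2 => nrm2 (x i1) * nrm2 (x pp1) * nrm2 (y i2) * nrm2 (y pp2))

/-- The corrected interpolating function `ψ₁`. -/
def psi1R (r : ℕ) (ε β s t : ℝ) (mv p q : ℕ → ℝ) (x : Fin l → Fin n → ℝ)
    (y : Fin l → Fin m → ℝ) : ℝ :=
  -(Real.sign s * s * β / (2 * Real.sqrt (n : ℝ))) *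
      (∑ k ∈ Finset.range (r+1),
        mv (k+1) * (p k * q k * EXR r ε β s t mv p q x y k
          - p (k+1) * q (k+1) * EXR r ε β s t mv p q x y (k+1)))
    + psiR r ε β s t mv p q x y

/-- The component `u_j^{(2,k)}`. -/
def u2c {r m n : ℕ} (U : Fin (r+1) → Us m n) (k : ℕ) (j : Fin m) : ℝ :=
  if h : k - 1 < r + 1 then (U ⟨k-1, h⟩).2.1 j else 0

/-- The scalar `u^{(4,k)}`. -/
def u4c {r m n : ℕ} (U : Fin (r+1) → Us m n) (k : ℕ) : ℝ :=
  if h : k - 1 < r + 1 then (U ⟨k-1, h⟩).1 else 0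

/-- `u^{(i₁,3,k)} = (h^{(k)})ᵀ x^{(i₁)} / ‖x^{(i₁)}‖₂`. -/
def u3c {r m n l : ℕ} (x : Fin l → Fin n → ℝ) (U : Fin (r+1) → Us m n) (k : ℕ)
    (i1 : Fin l) : ℝ :=
  if h : k - 1 < r + 1 then dotv (U ⟨k-1, h⟩).2.2 (x i1) / nrm2 (x i1) else 0

/-- The nested conditional expectations
`E_{𝒰_v}(ζ_{v-1}^{𝔪_v/𝔪_{v-1}-1} ⋯ E_{𝒰₁}(ζ₀^{𝔪₁/𝔪₀-1} g) ⋯)`. -/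
def nestR (r : ℕ) (ε β s t : ℝ) (mv p q : ℕ → ℝ) (x : Fin l → Fin n → ℝ)
    (y : Fin l → Fin m → ℝ) (g : (Fin m → Fin n → ℝ) → (Fin (r+1) → Us m n) → ℝ) :
    ℕ → (Fin m → Fin n → ℝ) → (Fin (r+1) → Us m n) → ℝ
  | 0 => g
  | v+1 => fun G U =>
      if h : v < r + 1 then
        ∫ u, zetaR r ε β s t mv p q x y G v (Function.update U ⟨v, h⟩ u) ^
              (mv (v+1) / mv v - 1) *
            nestR r ε β s t mv p q x y g v G (Function.update U ⟨v, h⟩ u) ∂ muU m n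
      else 0

/-- `T^p_{k,1,j}(i₁,i₂)` at the `r`-th level. -/
def TpR (r : ℕ) (ε β s t : ℝ) (mv p q : ℕ → ℝ) (x : Fin l → Fin n → ℝ)
    (y : Fin l → Fin m → ℝ) (k : ℕ) (j : Fin m) (i1 i2 : Fin l) : ℝ :=
  ∫ ω, (zetaR r ε β s t mv p q x y ω.1 r ω.2)⁻¹ *
      nestR r ε β s t mv p q x y
        (fun G U => CR r ε β s t mv p q x y G U i1 ^ (s - 1) *
          AR r ε β s t mv p q x y G U i1 i2 * y i2 j * u2c U k j) r ω.1 ω.2 ∂ muAll r m n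

/-- `T^q_{k,2}(i₁,i₂)` at the `r`-th level. -/
def TqR (r : ℕ) (ε β s t : ℝ) (mv p q : ℕ → ℝ) (x : Fin l → Fin n → ℝ)
    (y : Fin l → Fin m → ℝ) (k : ℕ) (i1 i2 : Fin l) : ℝ :=
  ∫ ω, (zetaR r ε β s t mv p q x y ω.1 r ω.2)⁻¹ *
      nestR r ε β s t mv p q x y
        (fun G U => CR r ε β s t mv p q x y G U i1 ^ (s - 1) *
          AR r ε β s t mv p q x y G U i1 i2 * u3c x U k i1) r ω.1 ω.2 ∂ muAll r m n

/-- `T^{(p,q)}_{k,3}(i₁,i₂)` at the `r`-th level. -/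
def TpqR (r : ℕ) (ε β s t : ℝ) (mv p q : ℕ → ℝ) (x : Fin l → Fin n → ℝ)
    (y : Fin l → Fin m → ℝ) (k : ℕ) (i1 i2 : Fin l) : ℝ :=
  ∫ ω, (zetaR r ε β s t mv p q x y ω.1 r ω.2)⁻¹ *
      nestR r ε β s t mv p q x y
        (fun G U => CR r ε β s t mv p q x y G U i1 ^ (s - 1) *
          AR r ε β s t mv p q x y G U i1 i2 * u4c U k) r ω.1 ω.2 ∂ muAll r m n

/-!
At `t = 1` and for unit vectors, `D₀^{(i₁,i₂)} = (y^{(i₂)})ᵀ G x^{(i₁)} + Σₖ aₖ u^{(4,k)}`, hence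
`Z = Z_S · exp (s β Σₖ aₖ u^{(4,k)})`. Integrating out `𝒰₁, …, 𝒰_r` one at a time, each step meets
the Gaussian moment generating function `E exp (λ u) = exp (λ² / 2)`; by induction
`ζ_k = (Z_S · exp (s β Σ_{j > k} a_j u^{(4,j)} + (s β)² / 2 · Σ_{j ≤ k} 𝔪_j a_j²)) ^ 𝔪_k`.
In `log ζ_r / 𝔪_r` the last term `a_{r+1} u^{(4,r+1)}` has mean zero, and the constant
`(s β)² / 2 · Σ_j 𝔪_j a_j²` is the correction between `ψ` and `ψ_S`.
-/

open ProbabilityTheory Finset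

lemma nonneg_of_antitone_of_eq_zero {f : ℕ → ℝ} {N : ℕ} (hmono : ∀ k < N, f (k+1) ≤ f k)
    (hend : f N = 0) : ∀ k ≤ N, 0 ≤ f k := fun _ hk =>
  Nat.decreasingInduction (motive := fun k _ => 0 ≤ f k)
    (fun k hk ih => ih.trans (hmono k hk)) hend.ge hk

lemma sign_mul_self_eq_abs (a : ℝ) : Real.sign a * a = |a| := by
  rcases lt_trichotomy a 0 with h | rfl | h
  · rw [Real.sign_of_neg h, abs_of_neg h, neg_one_mul]
  · simp
  · rw [Real.sign_of_pos h, abs_of_pos h, one_mul]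

lemma inv_mul_sq_div_two (a b : ℝ) : (a * b)⁻¹ * (a ^ 2 / 2) = a / (2 * b) := by
  rcases eq_or_ne a 0 with rfl | ha
  · simp
  · field_simp

lemma abs_log_sum_exp_le {ι : Type*} {t : Finset ι} (ht : t.Nonempty) (a : ι → ℝ) :
    |log (∑ i ∈ t, exp (a i))| ≤ log t.card + ∑ i ∈ t, |a i| := by
  set B := ∑ i ∈ t, |a i|
  obtain ⟨i₀, hi₀⟩ := ht
  have hB : ∀ i ∈ t, |a i| ≤ B := fun i hi => single_le_sum (fun j _ => abs_nonneg (a j)) hi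
  have hlow : exp (-B) ≤ ∑ i ∈ t, exp (a i) :=
    (exp_le_exp.2 (by linarith [neg_abs_le (a i₀), hB i₀ hi₀])).trans
      (single_le_sum (fun i _ => (exp_pos (a i)).le) hi₀)
  have hup : ∑ i ∈ t, exp (a i) ≤ t.card * exp B := by
    rw [← nsmul_eq_mul]
    exact sum_le_card_nsmul _ _ _ fun i hi => exp_le_exp.2 ((le_abs_self _).trans (hB i hi))
  have hcard : (1 : ℝ) ≤ t.card := by exact_mod_cast card_pos.2 ⟨i₀, hi₀⟩
  have hlog_low := log_le_log (exp_pos _) hlow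
  have hlog_up := log_le_log ((exp_pos _).trans_le hlow) hup
  rw [log_exp] at hlog_low
  rw [log_mul (by positivity) (exp_pos _).ne', log_exp] at hlog_up
  rw [abs_le]
  constructor <;> linarith [log_nonneg hcard]

instance : IsProbabilityMeasure stdG := by unfold stdG; infer_instance

instance (d : ℕ) : IsProbabilityMeasure (gVec d) := by unfold gVec; infer_instance

instance (m n : ℕ) : IsProbabilityMeasure (gMat m n) := by unfold gMat; infer_instance

instance (m n : ℕ) : IsProbabilityMeasure (muU m n) := by unfold muU; infer_instance

instance (r m n : ℕ) : IsProbabilityMeasure (muAll r m n) := by unfold muAll; infer_instance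

lemma integrable_id_stdG : Integrable (fun x : ℝ => x) stdG :=
  memLp_one_iff_integrable.1 (memLp_id_gaussianReal 1)

lemma integral_id_stdG : ∫ x, x ∂stdG = 0 := integral_id_gaussianReal

lemma integral_exp_mul_stdG (c : ℝ) : ∫ x, exp (c * x) ∂stdG = exp (c ^ 2 / 2) := by
  simpa [stdG, mgf, mul_comm _ c] using congrFun (mgf_fun_id_gaussianReal (μ := 0) (v := 1)) c

lemma integrable_entry_gMat (m n : ℕ) (j : Fin m) (k : Fin n) :
    Integrable (fun G : Fin m → Fin n → ℝ => G j k) (gMat m n) := by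
  have hrow : Integrable (fun v : Fin n → ℝ => v k) (gVec n) := by
    unfold gVec
    exact integrable_comp_eval (μ := fun _ => stdG) (f := fun a : ℝ => a) integrable_id_stdG
  unfold gMat
  exact integrable_comp_eval (μ := fun _ => gVec n) (f := fun v : Fin n → ℝ => v k) hrow

section FirstCoordinate

variable (m n : ℕ)

lemma integrable_fst_muU : Integrable (fun u : Us m n => u.1) (muU m n) :=
  integrable_id_stdG.comp_fst _

lemma integral_fst_muU : ∫ u : Us m n, u.1 ∂muU m n = 0 := by
  rw [muU, integral_fun_fst (fun a : ℝ => a), integral_id_stdG, smul_zero]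

lemma integral_rpow_mul_exp_fst_muU {A : ℝ} (hA : 0 ≤ A) (b e : ℝ) :
    ∫ u : Us m n, (A * exp (b * u.1)) ^ e ∂muU m n = (A * exp (e * b ^ 2 / 2)) ^ e := by
  simp_rw [mul_rpow hA (exp_pos _).le, ← exp_mul, mul_comm _ e, ← mul_assoc]
  rw [integral_const_mul, muU, integral_fun_fst (fun a : ℝ => exp (e * b * a)),
    integral_exp_mul_stdG, probReal_univ, one_smul]
  ring_nf

lemma integrable_fst_eval_muU {r : ℕ} (j : Fin (r+1)) :
    Integrable (fun U : Fin (r+1) → Us m n => (U j).1) (Measure.pi fun _ => muU m n) :=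
  integrable_comp_eval (μ := fun _ => muU m n) (f := fun u : Us m n => u.1)
    (integrable_fst_muU m n)

end FirstCoordinate

/-- `Z_S` at `t = 1` for unit-norm families; it no longer depends on the `𝒰_k`. -/
def ZSR (β s : ℝ) (x : Fin l → Fin n → ℝ) (y : Fin l → Fin m → ℝ) (G : Fin m → Fin n → ℝ) : ℝ :=
  ∑ i1, (∑ i2, exp (β * ∑ j, ∑ k, y i2 j * (G j k * x i1 k))) ^ s

/-- `Σ_{j ≥ k} a_{j+1} u^{(4,j+1)}`: coordinate `j` of `U` is the group `𝒰_{j+1}`. -/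
def u4Tail {r : ℕ} (p q : ℕ → ℝ) (k : ℕ) (U : Fin (r+1) → Us m n) : ℝ :=
  ∑ j ∈ univ.filter (fun j : Fin (r+1) => k ≤ (j : ℕ)),
    √(p j * q j - p (j+1) * q (j+1)) * (U j).1

def gapWeight (mv p q : ℕ → ℝ) (k : ℕ) : ℝ :=
  ∑ j ∈ range k, mv (j+1) * (p j * q j - p (j+1) * q (j+1))

lemma gapWeight_succ (mv p q : ℕ → ℝ) (k : ℕ) :
    gapWeight mv p q (k+1) = gapWeight mv p q k + mv (k+1) * (p k * q k - p (k+1) * q (k+1)) :=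
  sum_range_succ _ _

section U4Tail

variable {r : ℕ} (p q : ℕ → ℝ) {k : ℕ}

lemma u4Tail_eq_add (hk : k < r + 1) (U : Fin (r+1) → Us m n) :
    u4Tail p q k U
      = √(p k * q k - p (k+1) * q (k+1)) * (U ⟨k, hk⟩).1 + u4Tail p q (k+1) U := by
  have hsplit : ∀ j : Fin (r+1), k ≤ (j : ℕ) ↔ j = ⟨k, hk⟩ ∨ k + 1 ≤ (j : ℕ) := by
    intro j
    simp only [Fin.ext_iff]
    omega
  rw [u4Tail, u4Tail, filter_congr (fun j _ => hsplit j), filter_or, sum_union, filter_eq']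
  · simp
  · rw [disjoint_filter]; rintro j - rfl; simp

lemma u4Tail_update (hk : k < r + 1) (u : Us m n) (U : Fin (r+1) → Us m n) :
    u4Tail p q (k+1) (Function.update U ⟨k, hk⟩ u) = u4Tail p q (k+1) U := by
  refine sum_congr rfl fun j hj => ?_
  have hne : j ≠ ⟨k, hk⟩ := by
    rintro rfl; simp at hj
  rw [Function.update_of_ne hne]

variable (k)

lemma integrable_u4Tail :
    Integrable (fun ω : (Fin m → Fin n → ℝ) × (Fin (r+1) → Us m n) => u4Tail p q k ω.2)
      (muAll r m n) :=
  (integrable_finsetSum _ fun j _ => (integrable_fst_eval_muU m n j).const_mul _).comp_snd _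

lemma integral_u4Tail :
    ∫ ω : (Fin m → Fin n → ℝ) × (Fin (r+1) → Us m n), u4Tail p q k ω.2 ∂muAll r m n = 0 := by
  have hpi : ∫ U, u4Tail p q k U ∂(Measure.pi fun _ : Fin (r+1) => muU m n) = 0 := by
    unfold u4Tail
    rw [integral_finsetSum _ fun j _ => (integrable_fst_eval_muU m n j).const_mul _]
    refine sum_eq_zero fun j _ => ?_
    rw [integral_const_mul, integral_comp_eval (μ := fun _ => muU m n)
      (f := fun u : Us m n => u.1) measurable_fst.aestronglyMeasurable, integral_fst_muU, mul_zero]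
  rw [muAll, integral_fun_snd (fun U => u4Tail p q k U), hpi, smul_zero]

end U4Tail

section ZSR

variable (β s : ℝ) (x : Fin l → Fin n → ℝ) (y : Fin l → Fin m → ℝ)

lemma ZSR_nonneg (G : Fin m → Fin n → ℝ) : 0 ≤ ZSR β s x y G := by
  unfold ZSR; positivity

lemma ZSR_pos (hl : 0 < l) (G : Fin m → Fin n → ℝ) : 0 < ZSR β s x y G :=
  have hne : (univ : Finset (Fin l)).Nonempty := univ_nonempty_iff.2 ⟨⟨0, hl⟩⟩
  sum_pos (fun _ _ => rpow_pos_of_pos (sum_pos (fun _ _ => exp_pos _) hne) s) hne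

lemma abs_log_ZSR_le (hl : 0 < l) (G : Fin m → Fin n → ℝ) :
    |log (ZSR β s x y G)| ≤ log l + ∑ i1, |s| * (log l +
      ∑ i2, |β * ∑ j, ∑ k, y i2 j * (G j k * x i1 k)|) := by
  have hne : (univ : Finset (Fin l)).Nonempty := univ_nonempty_iff.2 ⟨⟨0, hl⟩⟩
  have hZ : ZSR β s x y G
      = ∑ i1, exp (log (∑ i2, exp (β * ∑ j, ∑ k, y i2 j * (G j k * x i1 k))) * s) :=
    sum_congr rfl fun i1 _ => rpow_def_of_pos (sum_pos (fun _ _ => exp_pos _) hne) s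
  rw [hZ]
  refine (abs_log_sum_exp_le hne _).trans ?_
  rw [card_univ, Fintype.card_fin]
  gcongr with i1
  rw [abs_mul, mul_comm]
  gcongr
  simpa only [card_univ, Fintype.card_fin] using abs_log_sum_exp_le hne _

lemma integrable_log_ZSR (hl : 0 < l) :
    Integrable (fun G => log (ZSR β s x y G)) (gMat m n) := by
  have hbil : ∀ i1 i2, Integrable (fun G : Fin m → Fin n → ℝ =>
      β * ∑ j, ∑ k, y i2 j * (G j k * x i1 k)) (gMat m n) := fun i1 i2 =>
    (integrable_finsetSum _ fun j _ => integrable_finsetSum _ fun k _ =>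
      ((integrable_entry_gMat m n j k).mul_const _).const_mul _).const_mul _
  refine Integrable.mono' ((integrable_const _).add (integrable_finsetSum _ fun i1 _ =>
      ((integrable_const _).add (integrable_finsetSum _ fun i2 _ => (hbil i1 i2).abs)).const_mul _))
    (Measurable.aestronglyMeasurable (by unfold ZSR; fun_prop))
    (ae_of_all _ fun G => abs_log_ZSR_le β s x y hl G)

end ZSR

section ClosedForm

variable {r : ℕ} {ε β s : ℝ} {mv p q : ℕ → ℝ} {x : Fin l → Fin n → ℝ} {y : Fin l → Fin m → ℝ}

lemma D0R_one (hxu : ∀ i, nrm2 (x i) = 1) (hyu : ∀ i, nrm2 (y i) = 1)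
    (G : Fin m → Fin n → ℝ) (U : Fin (r+1) → Us m n) (i1 i2 : Fin l) :
    D0R r ε β s 1 mv p q x y G U i1 i2
      = ∑ j, ∑ k, y i2 j * (G j k * x i1 k) + ε * u4Tail p q 0 U := by
  simp [D0R, u4Tail, hxu, hyu]

lemma ZR_one (hxu : ∀ i, nrm2 (x i) = 1) (hyu : ∀ i, nrm2 (y i) = 1)
    (G : Fin m → Fin n → ℝ) (U : Fin (r+1) → Us m n) :
    ZR r ε β s 1 mv p q x y G U = ZSR β s x y G * exp (ε * s * β * u4Tail p q 0 U) := by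
  have hC : ∀ i1, CR r ε β s 1 mv p q x y G U i1
      = (∑ i2, exp (β * ∑ j, ∑ k, y i2 j * (G j k * x i1 k)))
        * exp (β * (ε * u4Tail p q 0 U)) := fun i1 => by
    simp only [CR, AR, D0R_one hxu hyu, sum_mul, ← exp_add, mul_add]
  simp only [ZR, ZSR, hC]
  rw [sum_mul]
  refine sum_congr rfl fun i1 _ => ?_
  rw [mul_rpow (by positivity) (exp_pos _).le, ← exp_mul]
  ring_nf

lemma zetaR_one_eq (hxu : ∀ i, nrm2 (x i) = 1) (hyu : ∀ i, nrm2 (y i) = 1) (hm0 : mv 0 = 1)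
    (hmne : ∀ k < r, mv k ≠ 0) (hgap : ∀ k < r, 0 ≤ p k * q k - p (k+1) * q (k+1))
    (G : Fin m → Fin n → ℝ) :
    ∀ k ≤ r, ∀ U, zetaR r ε β s 1 mv p q x y G k U
      = (ZSR β s x y G * exp (ε * s * β * u4Tail p q k U
          + (ε * s * β) ^ 2 / 2 * gapWeight mv p q k)) ^ mv k
  | 0, _, U => by
    rw [zetaR, ZR_one hxu hyu, hm0, rpow_one, gapWeight, sum_range_zero, mul_zero, add_zero]
  | k + 1, hk, U => by
    have hk' : k < r + 1 := by omega
    have hZ := ZSR_nonneg β s x y G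
    have hpow : ∀ u : Us m n,
        zetaR r ε β s 1 mv p q x y G k (Function.update U ⟨k, hk'⟩ u) ^ (mv (k+1) / mv k)
          = (ZSR β s x y G * exp (ε * s * β * u4Tail p q (k+1) U
              + (ε * s * β) ^ 2 / 2 * gapWeight mv p q k)
            * exp (ε * s * β * √(p k * q k - p (k+1) * q (k+1)) * u.1)) ^ mv (k+1) := by
      intro u
      rw [zetaR_one_eq hxu hyu hm0 hmne hgap G k (by omega), u4Tail_eq_add p q hk',
        Function.update_self, u4Tail_update p q hk', ← rpow_mul (by positivity),
        mul_div_cancel₀ _ (hmne k (by omega)), mul_assoc (ZSR β s x y G), ← exp_add]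
      ring_nf
    rw [zetaR, dif_pos hk']
    simp only [hpow]
    rw [integral_rpow_mul_exp_fst_muU m n (by positivity), mul_assoc (ZSR β s x y G), ← exp_add,
      mul_pow _ √_, sq_sqrt (hgap k (by omega)), gapWeight_succ]
    ring_nf

end ClosedForm

lemma psiR_one_eq {r : ℕ} (ε β s : ℝ) {mv p q : ℕ → ℝ} {x : Fin l → Fin n → ℝ}
    {y : Fin l → Fin m → ℝ} (hl : 0 < l) (hxu : ∀ i, nrm2 (x i) = 1) (hyu : ∀ i, nrm2 (y i) = 1)
    (hm0 : mv 0 = 1) (hmne : ∀ k ≤ r, mv k ≠ 0)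
    (hgap : ∀ k < r, 0 ≤ p k * q k - p (k+1) * q (k+1)) :
    psiR r ε β s 1 mv p q x y = (β * |s| * √n)⁻¹ *
      (∫ G, log (ZSR β s x y G) ∂gMat m n + (ε * s * β) ^ 2 / 2 * gapWeight mv p q r) := by
  set K := (β * |s| * √n)⁻¹
  set c := ε * s * β
  have hK : (β * |s| * √n * mv r)⁻¹ * mv r = K := by
    rw [mul_inv, mul_assoc, inv_mul_cancel₀ (hmne r le_rfl), mul_one]
  have hpt : ∀ ω : (Fin m → Fin n → ℝ) × (Fin (r+1) → Us m n),
      (β * |s| * √n * mv r)⁻¹ * log (zetaR r ε β s 1 mv p q x y ω.1 r ω.2)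
        = K * log (ZSR β s x y ω.1) + K * c * u4Tail p q r ω.2
          + K * (c ^ 2 / 2 * gapWeight mv p q r) := by
    intro ω
    have hZ := ZSR_pos β s x y hl ω.1
    rw [zetaR_one_eq hxu hyu hm0 (fun k hk => hmne k hk.le) hgap ω.1 r le_rfl ω.2,
      log_rpow (mul_pos hZ (exp_pos _)), log_mul hZ.ne' (exp_ne_zero _), log_exp]
    linear_combination (log (ZSR β s x y ω.1) + c * u4Tail p q r ω.2
      + c ^ 2 / 2 * gapWeight mv p q r) * hK
  have hlogZ : Integrable (fun ω : (Fin m → Fin n → ℝ) × (Fin (r+1) → Us m n) =>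
      K * log (ZSR β s x y ω.1)) (muAll r m n) :=
    ((integrable_log_ZSR β s x y hl).comp_fst _).const_mul K
  have hT := (integrable_u4Tail (r := r) (m := m) (n := n) p q r).const_mul (K * c)
  unfold psiR
  simp_rw [hpt]
  rw [integral_add _ (integrable_const _), integral_add hlogZ hT, integral_const_mul,
    integral_const_mul, integral_u4Tail (r := r), muAll,
    integral_fun_fst (fun G => log (ZSR β s x y G))]
  · simp [mul_add]
  · exact hlogZ.add hT

theorem gaussian_integration_psi_psiS_general
    (r m n l : ℕ) (hl : 1 ≤ l)
    (β s : ℝ)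
    (mv p q : ℕ → ℝ)
    (hm0 : mv 0 = 1) (hmr1 : mv (r+1) = 0) (hmpos : ∀ k, 1 ≤ k → k ≤ r → 0 < mv k)
    (hpmono : ∀ k ≤ r, p (k+1) ≤ p k) (hpend : p (r+1) = 0)
    (hqmono : ∀ k ≤ r, q (k+1) ≤ q k) (hqend : q (r+1) = 0)
    (x : Fin l → Fin n → ℝ) (y : Fin l → Fin m → ℝ)
    (hxu : ∀ i, nrm2 (x i) = 1) (hyu : ∀ i, nrm2 (y i) = 1) :
    psiR r 0 β s 1 mv p q x y
      = -(Real.sign s * s * β / (2 * Real.sqrt (n : ℝ))) *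
          (∑ k ∈ Finset.range (r+1), (p k * q k - p (k+1) * q (k+1)) * mv (k+1))
        + psiR r 1 β s 1 mv p q x y := by
  have hmne : ∀ k ≤ r, mv k ≠ 0 := fun k hk =>
    k.eq_zero_or_pos.elim (fun h => h ▸ hm0 ▸ one_ne_zero) fun h => (hmpos k h hk).ne'
  have hp := nonneg_of_antitone_of_eq_zero (fun k hk => hpmono k (Nat.lt_succ_iff.1 hk)) hpend
  have hq := nonneg_of_antitone_of_eq_zero (fun k hk => hqmono k (Nat.lt_succ_iff.1 hk)) hqend
  have hgap : ∀ k < r, 0 ≤ p k * q k - p (k+1) * q (k+1) := fun k hk =>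
    sub_nonneg.2 (mul_le_mul (hpmono k hk.le) (hqmono k hk.le) (hq _ (by omega)) (hp _ (by omega)))
  have hsum : ∑ k ∈ range (r+1), (p k * q k - p (k+1) * q (k+1)) * mv (k+1)
      = gapWeight mv p q r := by
    rw [sum_range_succ, hmr1, mul_zero, add_zero, gapWeight]
    exact sum_congr rfl fun k _ => mul_comm _ _
  have hcoef : (β * |s| * √n)⁻¹ * ((1 * s * β) ^ 2 / 2) = Real.sign s * s * β / (2 * √n) := by
    rw [sign_mul_self_eq_abs, show (1 * s * β) ^ 2 = (β * |s|) ^ 2 by rw [mul_pow β, sq_abs]; ring,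
      inv_mul_sq_div_two, mul_comm β]
  rw [psiR_one_eq 0 β s hl hxu hyu hm0 hmne hgap, psiR_one_eq 1 β s hl hxu hyu hm0 hmne hgap, hsum]
  linear_combination (-gapWeight mv p q r) * hcoef

/-- Gaussian integration identity relating `ψ` and `ψ_S` at `t = 1` for unit-norm sets. -/
theorem gaussian_integration_psi_psiS
    (r m n l : ℕ) (hr : 1 ≤ r) (hm : 1 ≤ m) (hn : 1 ≤ n) (hl : 1 ≤ l)
    (β s : ℝ) (hβ : 0 < β) (hs : s ≠ 0)
    (mv p q : ℕ → ℝ)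
    (hm0 : mv 0 = 1) (hmr1 : mv (r+1) = 0) (hmpos : ∀ k, 1 ≤ k → k ≤ r → 0 < mv k)
    (hp0 : p 0 ≤ 1) (hpmono : ∀ k ≤ r, p (k+1) ≤ p k) (hpend : p (r+1) = 0)
    (hq0 : q 0 ≤ 1) (hqmono : ∀ k ≤ r, q (k+1) ≤ q k) (hqend : q (r+1) = 0)
    (x : Fin l → Fin n → ℝ) (y : Fin l → Fin m → ℝ)
    (hx : ∀ i, x i ≠ 0) (hy : ∀ i, y i ≠ 0)
    (hxu : ∀ i, nrm2 (x i) = 1) (hyu : ∀ i, nrm2 (y i) = 1) :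
    psiR r 0 β s 1 mv p q x y
      = -(Real.sign s * s * β / (2 * Real.sqrt (n : ℝ))) *
          (∑ k ∈ Finset.range (r+1), (p k * q k - p (k+1) * q (k+1)) * mv (k+1))
        + psiR r 1 β s 1 mv p q x y :=
  gaussian_integration_psi_psiS_general r m n l hl β s mv p q hm0 hmr1 hmpos hpmono hpend hqmono
    hqend x y hxu hyu

end

end SFLR
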